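/- Let X₁, X₂, X₃ be normed vector spaces over ℝ and let H₁ : S → X₁, H₂ : S → X₂, H₃ : S → X₃ be bounded functions on a set S, with sup-norm distance on functions. Define d(Hᵢ, Hⱼ) = max( inf over linear maps A with operator norm ≤ 1 of sup_{s∈S} ‖A (Hᵢ s) − Hⱼ s‖, inf over linear maps B with operator norm ≤ 1 of sup_{s∈S} ‖Hᵢ s − B (Hⱼ s)‖ ). Then d satisfies the triangle inequality: d(H₁, H₃) ≤ d(H₁, H₂) + d(H₂, H₃). -/

import Mathlib

open scoped BigOperators

/-- Bidirectional linear-approximation "representation similarity" distance: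
`max` of the infimum over operator-norm-≤1 linear encoders of the sup-norm error,
and the analogous infimum over decoders. -/
noncomputable def dRepr {S : Type*} {X Y : Type*}
    [NormedAddCommGroup X] [NormedSpace ℝ X]
    [NormedAddCommGroup Y] [NormedSpace ℝ Y]
    (H₁ : S → X) (H₂ : S → Y) : ℝ :=
  max (⨅ A : {A : X →L[ℝ] Y // ‖A‖ ≤ 1}, ⨆ s : S, ‖A.1 (H₁ s) - H₂ s‖)
      (⨅ B : {B : Y →L[ℝ] X // ‖B‖ ≤ 1}, ⨆ s : S, ‖H₁ s - B.1 (H₂ s)‖)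

/-!
Splitting `dRepr` into its two one-sided halves, it suffices to prove the triangle inequality for
the encoder error `inf_A sup_s ‖A (H₁ s) - H₂ s‖`. Given admissible `A : X → Y` and `B : Y → Z`,
the composite `B ∘ A` is admissible, and since `B` is `1`-Lipschitz,
`‖B (A x) - z‖ ≤ ‖A x - y‖ + ‖B y - z‖` pointwise; taking sups over `S` and infs over `A`, `B`
gives the claim. Boundedness of the `Hᵢ` is what makes the sups over `S` genuine suprema.
-/

open Set

section LinApproxError

variable (𝕜 : Type*) {S X Y Z : Type*} [NontriviallyNormedField 𝕜]
  [SeminormedAddCommGroup X] [NormedSpace 𝕜 X]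
  [SeminormedAddCommGroup Y] [NormedSpace 𝕜 Y]
  [SeminormedAddCommGroup Z] [NormedSpace 𝕜 Z]

instance : Nonempty {A : X →L[𝕜] Y // ‖A‖ ≤ 1} := ⟨⟨0, by simp⟩⟩

noncomputable def linApproxError (H₁ : S → X) (H₂ : S → Y) : ℝ :=
  ⨅ A : {A : X →L[𝕜] Y // ‖A‖ ≤ 1}, ⨆ s, ‖A.1 (H₁ s) - H₂ s‖

variable {𝕜}

theorem bddAbove_range_norm_apply_sub {H₁ : S → X} {H₂ : S → Y} {C₁ C₂ : ℝ}
    (h₁ : ∀ s, ‖H₁ s‖ ≤ C₁) (h₂ : ∀ s, ‖H₂ s‖ ≤ C₂) (A : X →L[𝕜] Y) :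
    BddAbove (range fun s => ‖A (H₁ s) - H₂ s‖) := by
  refine ⟨‖A‖ * C₁ + C₂, ?_⟩
  rintro _ ⟨s, rfl⟩
  exact (norm_sub_le _ _).trans (add_le_add (A.le_opNorm_of_le (h₁ s)) (h₂ s))

theorem norm_apply_sub_le_of_opNorm_le_one {B : Y →L[𝕜] Z} (hB : ‖B‖ ≤ 1) (u y : Y) (z : Z) :
    ‖B u - z‖ ≤ ‖u - y‖ + ‖B y - z‖ :=
  calc ‖B u - z‖ = ‖B (u - y) + (B y - z)‖ := by rw [map_sub, sub_add_sub_cancel]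
    _ ≤ ‖B (u - y)‖ + ‖B y - z‖ := norm_add_le _ _
    _ ≤ ‖u - y‖ + ‖B y - z‖ := by
        gcongr
        exact B.le_of_opNorm_le hB _ |>.trans_eq (one_mul _)

theorem iSup_norm_comp_apply_sub_le {H₁ : S → X} {H₂ : S → Y} {H₃ : S → Z}
    {A : X →L[𝕜] Y} {B : Y →L[𝕜] Z} (hB : ‖B‖ ≤ 1)
    (hA_bdd : BddAbove (range fun s => ‖A (H₁ s) - H₂ s‖))
    (hB_bdd : BddAbove (range fun s => ‖B (H₂ s) - H₃ s‖)) :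
    ⨆ s, ‖(B.comp A) (H₁ s) - H₃ s‖ ≤
      (⨆ s, ‖A (H₁ s) - H₂ s‖) + ⨆ s, ‖B (H₂ s) - H₃ s‖ := by
  refine Real.iSup_le (fun s => ?_) <|
    add_nonneg (Real.iSup_nonneg fun _ => norm_nonneg _) (Real.iSup_nonneg fun _ => norm_nonneg _)
  exact (norm_apply_sub_le_of_opNorm_le_one hB (A (H₁ s)) (H₂ s) (H₃ s)).trans <|
    add_le_add (le_ciSup hA_bdd s) (le_ciSup hB_bdd s)

theorem linApproxError_triangle {H₁ : S → X} {H₂ : S → Y} {H₃ : S → Z}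
    (hb₁ : ∃ C, ∀ s, ‖H₁ s‖ ≤ C) (hb₂ : ∃ C, ∀ s, ‖H₂ s‖ ≤ C)
    (hb₃ : ∃ C, ∀ s, ‖H₃ s‖ ≤ C) :
    linApproxError 𝕜 H₁ H₃ ≤ linApproxError 𝕜 H₁ H₂ + linApproxError 𝕜 H₂ H₃ := by
  obtain ⟨C₁, h₁⟩ := hb₁
  obtain ⟨C₂, h₂⟩ := hb₂
  obtain ⟨C₃, h₃⟩ := hb₃
  refine le_ciInf_add_ciInf fun A B => ?_
  have hBA : ‖B.1.comp A.1‖ ≤ 1 :=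
    (B.1.opNorm_comp_le A.1).trans (mul_le_one₀ B.2 (norm_nonneg _) A.2)
  have h_bddBelow : BddBelow (range fun C : {C : X →L[𝕜] Z // ‖C‖ ≤ 1} =>
      ⨆ s, ‖C.1 (H₁ s) - H₃ s‖) :=
    ⟨0, by rintro _ ⟨C, rfl⟩; exact Real.iSup_nonneg fun _ => norm_nonneg _⟩
  exact (ciInf_le h_bddBelow ⟨_, hBA⟩).trans <| iSup_norm_comp_apply_sub_le B.2
    (bddAbove_range_norm_apply_sub h₁ h₂ A.1) (bddAbove_range_norm_apply_sub h₂ h₃ B.1)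

end LinApproxError

theorem dRepr_eq_max_linApproxError {S X Y : Type*}
    [NormedAddCommGroup X] [NormedSpace ℝ X] [NormedAddCommGroup Y] [NormedSpace ℝ Y]
    (H₁ : S → X) (H₂ : S → Y) :
    dRepr H₁ H₂ = max (linApproxError ℝ H₁ H₂) (linApproxError ℝ H₂ H₁) := by
  simp only [dRepr, linApproxError, norm_sub_rev (H₁ _)]

/-- Triangle inequality for representation similarity. -/
theorem dRepr_triangle {S X₁ X₂ X₃ : Type*}
    [NormedAddCommGroup X₁] [NormedSpace ℝ X₁]
    [NormedAddCommGroup X₂] [NormedSpace ℝ X₂]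
    [NormedAddCommGroup X₃] [NormedSpace ℝ X₃]
    (H₁ : S → X₁) (H₂ : S → X₂) (H₃ : S → X₃)
    (hb₁ : ∃ C, ∀ s, ‖H₁ s‖ ≤ C) (hb₂ : ∃ C, ∀ s, ‖H₂ s‖ ≤ C)
    (hb₃ : ∃ C, ∀ s, ‖H₃ s‖ ≤ C) :
    dRepr H₁ H₃ ≤ dRepr H₁ H₂ + dRepr H₂ H₃ := by
  simp only [dRepr_eq_max_linApproxError]
  refine max_le ?_ ?_
  · exact (linApproxError_triangle hb₁ hb₂ hb₃).trans <|
      add_le_add (le_max_left _ _) (le_max_left _ _)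
  · exact (linApproxError_triangle hb₃ hb₂ hb₁).trans <| by
      rw [add_comm]
      exact add_le_add (le_max_right _ _) (le_max_right _ _)
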